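/- (Growth of the gauge along outgoing disto-lines.) Let ℓ ≥ 1, let (c,d) ∈ S (i.e. |c|^{2ℓ} + d² = 1) with c ≠ 0, let ϱ ∈ ℝ with cϱ > 0, and let (t,s) ∈ ℝ² with ⟨(c,d)|(t,s)⟩_ℓ ≥ 0. Then, along the disto-line t(τ) = t + ϱτ, s(τ) = s + (d/f_ℓ(c))(f_ℓ(t(τ)) − f_ℓ(t)), one has for every τ ≥ 0: ρ(t(τ),s(τ))^{2ℓ} − ρ(t,s)^{2ℓ} ≥ (ϱτ/(2c))^{2ℓ}. -/

import Mathlib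

open MeasureTheory Real Set

noncomputable section

/-- `f_ℓ(σ) = σ|σ|^{ℓ-1}`. -/
def fl (l : ℝ) (σ : ℝ) : ℝ := σ * |σ| ^ (l - 1)

/-- The disto-scalar product `⟨v|w⟩_ℓ`. -/
def distoDot (l : ℝ) (v w : ℝ × ℝ) : ℝ := fl l v.1 * fl l w.1 + v.2 * w.2

/-- The distorted determinant `Δ_ℓ(v;w)`. -/
def distoDet (l : ℝ) (v w : ℝ × ℝ) : ℝ := fl l v.1 * w.2 - v.2 * fl l w.1

/-- The quasihomogeneous gauge `ρ(t,s)`. -/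
def qgauge (l : ℝ) (p : ℝ × ℝ) : ℝ := (|p.1| ^ (2 * l) + p.2 ^ 2) ^ (1 / (2 * l))

/-- First coordinate of the disto-line through `(t,s)` parallel to `(c,d)` with speed `ϱ`. -/
def lineT (ϱ t : ℝ) (τ : ℝ) : ℝ := t + ϱ * τ

/-- Second coordinate of the disto-line through `(t,s)` parallel to `(c,d)` with speed `ϱ`. -/
def lineS (l c d ϱ t s : ℝ) (τ : ℝ) : ℝ := s + d / fl l c * (fl l (t + ϱ * τ) - fl l t)

/-!
In the coordinates `(f_ℓ(t), s)` the gauge becomes Euclidean, `ρ^{2ℓ} = ⟨p|p⟩_ℓ`, and the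
disto-line becomes the affine line `(f_ℓ(t), s) + λ (f_ℓ(c), d)` with
`λ = (f_ℓ(t(τ)) - f_ℓ(t)) / f_ℓ(c)`. Since `⟨(c,d)|(c,d)⟩_ℓ = 1`, the growth of `ρ^{2ℓ}`
is `λ² + 2λ ⟨(c,d)|(t,s)⟩_ℓ ≥ λ²`, and `λ ≥ (ϱτ/(2c))^ℓ` because
`f_ℓ(a) - f_ℓ(b) ≥ ((a-b)/2)^ℓ` for `b ≤ a`: superadditivity of `x ↦ x^ℓ` when `a, b` have
the same sign, and `max (a, -b) ≥ (a-b)/2` when they do not.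
-/

section fl

variable {l : ℝ}

lemma fl_of_nonneg (hl : l ≠ 0) {x : ℝ} (hx : 0 ≤ x) : fl l x = x ^ l := by
  rcases hx.eq_or_lt with rfl | hx
  · simp [fl, Real.zero_rpow hl]
  · rw [fl, abs_of_pos hx, ← Real.rpow_one_add' hx.le (by simpa using hl)]
    ring_nf

lemma fl_neg (x : ℝ) : fl l (-x) = -fl l x := by
  simp [fl]

lemma fl_ne_zero {c : ℝ} (hc : c ≠ 0) : fl l c ≠ 0 :=
  mul_ne_zero hc (Real.rpow_pos_of_pos (abs_pos.2 hc) _).ne'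

lemma fl_sq (hl : l ≠ 0) (x : ℝ) : fl l x ^ 2 = |x| ^ (2 * l) := by
  have habs : |fl l x| = |x| ^ l := by
    rw [← fl_of_nonneg hl (abs_nonneg x), fl, fl, abs_mul, abs_abs,
      abs_of_nonneg (Real.rpow_nonneg (abs_nonneg x) _)]
  rw [← sq_abs, habs, mul_comm, Real.rpow_mul (abs_nonneg x), Real.rpow_two]

lemma half_sub_rpow_le_fl_sub_of_nonneg (hl : 1 ≤ l) {a b : ℝ} (hb : 0 ≤ b) (hab : b ≤ a) :
    ((a - b) / 2) ^ l ≤ fl l a - fl l b := by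
  have hl0 : l ≠ 0 := by positivity
  have hsuper : (a - b) ^ l + b ^ l ≤ a ^ l := by
    simpa using Real.add_rpow_le_rpow_add (sub_nonneg.2 hab) hb hl
  have hhalf : ((a - b) / 2) ^ l ≤ (a - b) ^ l :=
    Real.rpow_le_rpow (by linarith) (by linarith) (by linarith)
  rw [fl_of_nonneg hl0 (hb.trans hab), fl_of_nonneg hl0 hb]
  linarith

lemma half_sub_rpow_le_fl_sub (hl : 1 ≤ l) {a b : ℝ} (hab : b ≤ a) :
    ((a - b) / 2) ^ l ≤ fl l a - fl l b := by
  rcases le_total 0 b with hb | hb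
  · exact half_sub_rpow_le_fl_sub_of_nonneg hl hb hab
  rcases le_total a 0 with ha | ha
  · have := half_sub_rpow_le_fl_sub_of_nonneg hl (neg_nonneg.2 ha) (neg_le_neg hab)
    rwa [fl_neg, fl_neg, neg_sub_neg, neg_sub_neg] at this
  · have hl0 : l ≠ 0 := by positivity
    have hfb : fl l b = -(-b) ^ l := by
      rw [← fl_of_nonneg hl0 (neg_nonneg.2 hb), fl_neg, neg_neg]
    rw [fl_of_nonneg hl0 ha, hfb, sub_neg_eq_add]
    have hmax : (a - b) / 2 ≤ max a (-b) := by
      linarith [le_max_left a (-b), le_max_right a (-b)]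
    calc ((a - b) / 2) ^ l ≤ max a (-b) ^ l :=
          Real.rpow_le_rpow (by linarith) hmax (by linarith)
      _ ≤ a ^ l + (-b) ^ l := by
          have := Real.rpow_nonneg ha l
          have := Real.rpow_nonneg (neg_nonneg.2 hb) l
          rcases max_choice a (-b) with h | h <;> rw [h] <;> linarith

lemma div_two_mul_rpow_le_fl_sub_div_of_pos (hl : 1 ≤ l) {c h : ℝ} (hc : 0 < c) (hh : 0 ≤ h)
    (t : ℝ) : (h / (2 * c)) ^ l ≤ (fl l (t + h) - fl l t) / fl l c := by
  rw [fl_of_nonneg (by positivity) hc.le, ← div_div,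
    Real.div_rpow (by positivity) hc.le]
  gcongr
  simpa using half_sub_rpow_le_fl_sub hl (le_add_of_nonneg_right hh : t ≤ t + h)

lemma div_two_mul_rpow_le_fl_sub_div (hl : 1 ≤ l) {c h : ℝ} (hc : c ≠ 0) (hch : 0 ≤ c * h)
    (t : ℝ) : (h / (2 * c)) ^ l ≤ (fl l (t + h) - fl l t) / fl l c := by
  rcases hc.lt_or_gt with hc | hc
  · have := div_two_mul_rpow_le_fl_sub_div_of_pos hl (neg_pos.2 hc)
      (neg_nonneg.2 (nonpos_of_mul_nonneg_right hch hc)) (-t)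
    rwa [mul_neg, neg_div_neg_eq, ← neg_add, fl_neg, fl_neg, fl_neg, neg_sub_neg, ← neg_sub,
      neg_div_neg_eq] at this
  · exact div_two_mul_rpow_le_fl_sub_div_of_pos hl hc (nonneg_of_mul_nonneg_right hch hc) t

end fl

lemma distoDot_self {l : ℝ} (hl : l ≠ 0) (v : ℝ × ℝ) :
    distoDot l v v = |v.1| ^ (2 * l) + v.2 ^ 2 := by
  rw [distoDot, ← sq, ← sq, fl_sq hl]

lemma qgauge_rpow {l : ℝ} (hl : l ≠ 0) (p : ℝ × ℝ) :
    qgauge l p ^ (2 * l) = distoDot l p p := by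
  rw [distoDot_self hl, qgauge, ← Real.rpow_mul (by positivity), one_div,
    inv_mul_cancel₀ (by positivity), Real.rpow_one]

lemma distoDot_self_line_sub (l c d ϱ t s τ : ℝ) (hc : fl l c ≠ 0) :
    distoDot l (lineT ϱ t τ, lineS l c d ϱ t s τ) (lineT ϱ t τ, lineS l c d ϱ t s τ)
        - distoDot l (t, s) (t, s)
      = ((fl l (t + ϱ * τ) - fl l t) / fl l c) ^ 2 * distoDot l (c, d) (c, d)
        + 2 * ((fl l (t + ϱ * τ) - fl l t) / fl l c) * distoDot l (c, d) (t, s) := by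
  simp only [distoDot, lineT, lineS]
  field_simp
  ring

/-- growth of the gauge along outgoing disto-lines. -/
theorem gauge_growth_along_line (l : ℝ) (hl : 1 ≤ l) (c d : ℝ) (hc : c ≠ 0)
    (hS : |c| ^ (2 * l) + d ^ 2 = 1) (ϱ : ℝ) (hcϱ : 0 < c * ϱ)
    (t s : ℝ) (hdot : 0 ≤ distoDot l (c, d) (t, s)) :
    ∀ τ : ℝ, 0 ≤ τ →
      (ϱ * τ / (2 * c)) ^ (2 * l) ≤
        qgauge l (lineT ϱ t τ, lineS l c d ϱ t s τ) ^ (2 * l) - qgauge l (t, s) ^ (2 * l) := by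
  intro τ hτ
  have hl0 : l ≠ 0 := by positivity
  have hch : 0 ≤ c * (ϱ * τ) := by rw [← mul_assoc]; exact mul_nonneg hcϱ.le hτ
  have hx : 0 ≤ ϱ * τ / (2 * c) := by
    rw [show ϱ * τ / (2 * c) = c * (ϱ * τ) / (2 * c ^ 2) by field_simp]
    positivity
  have hunit : distoDot l (c, d) (c, d) = 1 := by rw [distoDot_self hl0]; exact hS
  have hgrowth := div_two_mul_rpow_le_fl_sub_div hl hc hch t
  set lam := (fl l (t + ϱ * τ) - fl l t) / fl l c
  have hlam : 0 ≤ lam := (Real.rpow_nonneg hx l).trans hgrowth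
  rw [qgauge_rpow hl0, qgauge_rpow hl0, distoDot_self_line_sub l c d ϱ t s τ (fl_ne_zero hc),
    hunit, mul_one]
  calc (ϱ * τ / (2 * c)) ^ (2 * l) = ((ϱ * τ / (2 * c)) ^ l) ^ 2 := by
        rw [mul_comm 2 l, Real.rpow_mul hx, Real.rpow_two]
    _ ≤ lam ^ 2 := pow_le_pow_left₀ (Real.rpow_nonneg hx l) hgrowth 2
    _ ≤ lam ^ 2 + 2 * lam * distoDot l (c, d) (t, s) :=
        le_add_of_nonneg_right (mul_nonneg (mul_nonneg zero_le_two hlam) hdot)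

end
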